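/- arXiv:math/0404460 — 3 statements merged into one kernel-verified Lean document; each statement's English description precedes it below -/
import Mathlib

section
/- Two-sided entropy-covariance inequality: for any probability measure ν on a finite set, nonnegative f, function g, and t > 0, |ν[f, g]| ≤ (ν[f]/t) · log( max( ν[e^{t(g−ν[g])}], ν[e^{−t(g−ν[g])}] ) ) + (1/t) · Ent_ν(f), where ν[f,g] := ν[fg] − ν[f]ν[g]. -/
/-!
By the Fenchel–Young inequality `a b ≤ a log (a / c) - a + c exp b` for the pair `x log x`, `exp`,
summed against `ν` with the scale `c = ν[f] / ν[e^h]`, every `h` satisfies the Gibbs variational inequality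
`ν[f h] ≤ ν[f] log ν[e^h] + Ent_ν(f)`. For `h = ±t (g - ν[g])` the left side is `±t ν[f, g]`;
bounding both `log ν[e^{±h}]` by the logarithm of their maximum and dividing by `t` gives the claim.
-/

open Finset Real

theorem mul_le_mul_log_sub_add_mul_exp {a c : ℝ} (b : ℝ) (ha : 0 ≤ a) (hc : 0 < c) :
    a * b ≤ a * (log a - log c) - a + c * exp b := by
  rcases ha.eq_or_lt with rfl | ha
  · simp only [zero_mul, zero_sub]
    positivity
  have hexp := add_one_le_exp (b - log a + log c)
  rw [exp_add, exp_sub, exp_log ha, exp_log hc] at hexp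
  have hscaled : a * (b - log a + log c + 1) ≤ c * exp b := by
    calc a * (b - log a + log c + 1) ≤ a * (exp b / a * c) :=
          mul_le_mul_of_nonneg_left hexp ha.le
      _ = c * exp b := by field_simp
  linarith

section Weighted

variable {Ω : Type*} [Fintype Ω] {ν f : Ω → ℝ}

theorem sum_mul_exp_pos (hν : ∀ ω, 0 ≤ ν ω) (hm : 0 < ∑ ω, ν ω * f ω) (h : Ω → ℝ) :
    0 < ∑ ω, ν ω * exp (h ω) := by
  obtain ⟨ω, -, hω⟩ := exists_ne_zero_of_sum_ne_zero hm.ne'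
  exact sum_pos' (fun ω _ => mul_nonneg (hν ω) (exp_pos _).le)
    ⟨ω, mem_univ _, mul_pos ((hν ω).lt_of_ne' (left_ne_zero_of_mul hω)) (exp_pos _)⟩

theorem sum_mul_mul_le_log_sum_exp_add_entropy (hν : ∀ ω, 0 ≤ ν ω) (hf : ∀ ω, 0 ≤ f ω)
    (hm : 0 < ∑ ω, ν ω * f ω) (h : Ω → ℝ) :
    ∑ ω, ν ω * (f ω * h ω) ≤
      (∑ ω, ν ω * f ω) * log (∑ ω, ν ω * exp (h ω)) +
        ((∑ ω, ν ω * (f ω * log (f ω))) - (∑ ω, ν ω * f ω) * log (∑ ω, ν ω * f ω)) := by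
  set m := ∑ ω, ν ω * f ω
  set Z := ∑ ω, ν ω * exp (h ω)
  have hZ : 0 < Z := sum_mul_exp_pos hν hm h
  have hc : 0 < m / Z := div_pos hm hZ
  have hterm : ∀ ω, ν ω * (f ω * (log (f ω) - log (m / Z)) - f ω + m / Z * exp (h ω)) =
      ν ω * (f ω * log (f ω)) - log (m / Z) * (ν ω * f ω) - ν ω * f ω +
        m / Z * (ν ω * exp (h ω)) := fun ω => by ring
  calc ∑ ω, ν ω * (f ω * h ω)
      ≤ ∑ ω, ν ω * (f ω * (log (f ω) - log (m / Z)) - f ω + m / Z * exp (h ω)) :=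
        sum_le_sum fun ω _ =>
          mul_le_mul_of_nonneg_left (mul_le_mul_log_sub_add_mul_exp _ (hf ω) hc) (hν ω)
    _ = ∑ ω, ν ω * (f ω * log (f ω)) - log (m / Z) * m - m + m / Z * Z := by
        simp only [hterm, sum_add_distrib, sum_sub_distrib, ← mul_sum]
        rfl
    _ = m * log Z + (∑ ω, ν ω * (f ω * log (f ω)) - m * log m) := by
        rw [log_div hm.ne' hZ.ne', div_mul_cancel₀ _ hZ.ne']
        ring

theorem mul_covariance_le_log_sum_exp_add_entropy (hν : ∀ ω, 0 ≤ ν ω) (hf : ∀ ω, 0 ≤ f ω)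
    (hm : 0 < ∑ ω, ν ω * f ω) (g : Ω → ℝ) (s : ℝ) :
    s * ((∑ ω, ν ω * (f ω * g ω)) - (∑ ω, ν ω * f ω) * (∑ ω, ν ω * g ω)) ≤
      (∑ ω, ν ω * f ω) * log (∑ ω, ν ω * exp (s * (g ω - ∑ ω', ν ω' * g ω'))) +
        ((∑ ω, ν ω * (f ω * log (f ω))) - (∑ ω, ν ω * f ω) * log (∑ ω, ν ω * f ω)) := by
  set G := ∑ ω', ν ω' * g ω'
  have hcov : ∑ ω, ν ω * (f ω * (s * (g ω - G))) =
      s * ((∑ ω, ν ω * (f ω * g ω)) - (∑ ω, ν ω * f ω) * G) := by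
    simp only [mul_sub, sum_sub_distrib, mul_sum, sum_mul]
    congr 1 <;> exact sum_congr rfl fun ω _ => by ring
  rw [← hcov]
  exact sum_mul_mul_le_log_sum_exp_add_entropy hν hf hm _

end Weighted

theorem entropy_covariance_inequality_general {Ω : Type*} [Fintype Ω]
    (ν f g : Ω → ℝ) (hν : ∀ ω, 0 ≤ ν ω)
    (hf : ∀ ω, 0 ≤ f ω) (hfpos : 0 < ∑ ω, ν ω * f ω) (t : ℝ) (ht : 0 < t) :
    |(∑ ω, ν ω * (f ω * g ω)) - (∑ ω, ν ω * f ω) * (∑ ω, ν ω * g ω)| ≤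
      ((∑ ω, ν ω * f ω) / t) *
        Real.log (max (∑ ω, ν ω * Real.exp (t * (g ω - ∑ ω', ν ω' * g ω')))
          (∑ ω, ν ω * Real.exp (-(t * (g ω - ∑ ω', ν ω' * g ω'))))) +
      (1 / t) * ((∑ ω, ν ω * (f ω * Real.log (f ω))) -
        (∑ ω, ν ω * f ω) * Real.log (∑ ω, ν ω * f ω)) := by
  have hup := mul_covariance_le_log_sum_exp_add_entropy hν hf hfpos g t
  have hlow := mul_covariance_le_log_sum_exp_add_entropy hν hf hfpos g (-t)
  simp only [neg_mul] at hlow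
  set m := ∑ ω, ν ω * f ω
  set Zp := ∑ ω, ν ω * exp (t * (g ω - ∑ ω', ν ω' * g ω'))
  set Zm := ∑ ω, ν ω * exp (-(t * (g ω - ∑ ω', ν ω' * g ω')))
  have hLp : m * log Zp ≤ m * log (max Zp Zm) := mul_le_mul_of_nonneg_left
    (log_le_log (sum_mul_exp_pos hν hfpos _) (le_max_left _ _)) hfpos.le
  have hLm : m * log Zm ≤ m * log (max Zp Zm) := mul_le_mul_of_nonneg_left
    (log_le_log (sum_mul_exp_pos hν hfpos _) (le_max_right _ _)) hfpos.le
  set cov := ∑ ω, ν ω * (f ω * g ω) - m * ∑ ω, ν ω * g ω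
  set ent := ∑ ω, ν ω * (f ω * log (f ω)) - m * log m
  have hbound : |t * cov| ≤ m * log (max Zp Zm) + ent := abs_le.2 ⟨by linarith, by linarith⟩
  rw [abs_mul, abs_of_pos ht] at hbound
  rw [div_mul_eq_mul_div, one_div_mul_eq_div, ← add_div, le_div_iff₀ ht]
  linarith

theorem entropy_covariance_inequality {Ω : Type*} [Fintype Ω]
    (ν f g : Ω → ℝ) (hν : ∀ ω, 0 ≤ ν ω) (hν1 : ∑ ω, ν ω = 1)
    (hf : ∀ ω, 0 ≤ f ω) (hfpos : 0 < ∑ ω, ν ω * f ω) (t : ℝ) (ht : 0 < t) :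
    |(∑ ω, ν ω * (f ω * g ω)) - (∑ ω, ν ω * f ω) * (∑ ω, ν ω * g ω)| ≤
      ((∑ ω, ν ω * f ω) / t) *
        Real.log (max (∑ ω, ν ω * Real.exp (t * (g ω - ∑ ω', ν ω' * g ω')))
          (∑ ω, ν ω * Real.exp (-(t * (g ω - ∑ ω', ν ω' * g ω'))))) +
      (1 / t) * ((∑ ω, ν ω * (f ω * Real.log (f ω))) -
        (∑ ω, ν ω * f ω) * Real.log (∑ ω, ν ω * f ω)) :=
  entropy_covariance_inequality_general ν f g hν hf hfpos t ht
end

section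
/- Normalization identity from reversibility: in the setting of the zero-range canonical measure with Λ = Λ₁ ∪ Λ₂, h(k) := (k+1)/c(k+1), and γ(n) := ν_Λ^N[η̄_{Λ₁}=n], for any y ∈ Λ₂ and n ∈ {1,…,N}: (γ(n−1)/(n γ(n))) · ν_Λ^N[ c(η_y) ∑_{x∈Λ₁} h(η_x) | η̄_{Λ₁} = n−1 ] = 1. -/
open Finset

/-- `cfact c n = c(1)⋯c(n)`, with `cfact c 0 = 1`. -/
noncomputable def cfact (c : ℕ → ℝ) (n : ℕ) : ℝ := ∏ k ∈ Finset.range n, c (k + 1)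

/-- Expectation of `f` under the canonical zero-range measure `ν_Λ^N` conditioned on
`η̄_{Λ₁} = n`. -/
noncomputable def condExp (c : ℕ → ℝ) {Λ : Type*} [Fintype Λ] [DecidableEq Λ]
    (Λ₁ : Finset Λ) (N n : ℕ) (f : (Λ → ℕ) → ℝ) : ℝ :=
  (∑ σ : Λ → Fin (N + 1),
      if (∑ z, (σ z : ℕ)) = N ∧ (∑ z ∈ Λ₁, (σ z : ℕ)) = n
      then (∏ z, (cfact c (σ z : ℕ))⁻¹) * f (fun z => (σ z : ℕ)) else 0) /
  (∑ σ : Λ → Fin (N + 1),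
      if (∑ z, (σ z : ℕ)) = N ∧ (∑ z ∈ Λ₁, (σ z : ℕ)) = n
      then ∏ z, (cfact c (σ z : ℕ))⁻¹ else 0)

/-- `γ(n) = ν_Λ^N[η̄_{Λ₁} = n]`. -/
noncomputable def gammaFun (c : ℕ → ℝ) {Λ : Type*} [Fintype Λ] [DecidableEq Λ]
    (Λ₁ : Finset Λ) (N n : ℕ) : ℝ :=
  (∑ σ : Λ → Fin (N + 1),
      if (∑ z, (σ z : ℕ)) = N ∧ (∑ z ∈ Λ₁, (σ z : ℕ)) = n
      then ∏ z, (cfact c (σ z : ℕ))⁻¹ else 0) /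
  (∑ σ : Λ → Fin (N + 1),
      if (∑ z, (σ z : ℕ)) = N then ∏ z, (cfact c (σ z : ℕ))⁻¹ else 0)

/-!
Both sides reduce to sums over configurations with one particle fewer. The weight
`w(η) = ∏ₓ 1 / c(1)⋯c(ηₓ)` satisfies `w(ζ + δ_z) c(ζ_z + 1) = w(ζ)`, so deleting the particle
at `y` from `w(η) c(η_y) h(η_x)` (over `η̄_{Λ₁} = n - 1`; terms with `η_y = 0` vanish since
`c(0) = 0`) and the particle at `x ∈ Λ₁` from `w(η) η_x` (over `η̄_{Λ₁} = n`) both leave the sum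
of `w(ζ) h(ζ_x)`. Summed over `x ∈ Λ₁`, the latter is `n` times the weight of `{η̄_{Λ₁} = n}`,
the unnormalised `n γ(n)`.
-/

namespace ZeroRange

variable {Λ : Type*} [DecidableEq Λ] {M : Type*} [AddCommMonoid M]

theorem sum_add_single_apply (s : Finset Λ) (ζ : Λ → ℕ) (z : Λ) :
    ∑ w ∈ s, (ζ + Pi.single z 1 : Λ → ℕ) w = ∑ w ∈ s, ζ w + if z ∈ s then 1 else 0 := by
  simp [sum_add_distrib]

variable [Fintype Λ]

def configs (Λ₁ : Finset Λ) (N m : ℕ) : Finset (Λ → ℕ) :=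
  {η ∈ piAntidiag univ N | ∑ z ∈ Λ₁, η z = m}

noncomputable def weight (c : ℕ → ℝ) (η : Λ → ℕ) : ℝ := ∏ z, (cfact c (η z))⁻¹

@[simp]
theorem mem_configs {Λ₁ : Finset Λ} {N m : ℕ} {η : Λ → ℕ} :
    η ∈ configs Λ₁ N m ↔ ∑ z, η z = N ∧ ∑ z ∈ Λ₁, η z = m := by
  simp [configs]

theorem sum_fin_eq_sum_piAntidiag (N : ℕ) (F : (Λ → ℕ) → M) :
    ∑ σ : Λ → Fin (N + 1), (if ∑ z, (σ z : ℕ) = N then F (fun z => σ z) else 0) =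
      ∑ η ∈ piAntidiag univ N, F η := by
  have hval : ∀ η ∈ piAntidiag (univ : Finset Λ) N, ∀ z,
      (Fin.ofNat (N + 1) (η z) : ℕ) = η z := by
    intro η hη z
    rw [mem_piAntidiag] at hη
    exact Nat.mod_eq_of_lt (Nat.lt_succ_of_le (hη.1 ▸ single_le_sum (by simp) (mem_univ z)))
  rw [← sum_filter]
  refine sum_nbij' (fun σ z => σ z) (fun η z => Fin.ofNat (N + 1) (η z)) ?_ ?_ ?_ ?_
    fun _ _ => rfl
  · intro σ hσ
    simp_all
  · intro η hη
    simp only [mem_filter, mem_univ, true_and, hval η hη]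
    exact (mem_piAntidiag.1 hη).1
  · intro σ _
    simp
  · intro η hη
    exact funext (hval η hη)

theorem sum_fin_eq_sum_configs (Λ₁ : Finset Λ) (N m : ℕ) (F : (Λ → ℕ) → M) :
    ∑ σ : Λ → Fin (N + 1),
        (if ∑ z, (σ z : ℕ) = N ∧ ∑ z ∈ Λ₁, (σ z : ℕ) = m then F (fun z => σ z) else 0) =
      ∑ η ∈ configs Λ₁ N m, F η := by
  rw [configs, sum_filter, ← sum_fin_eq_sum_piAntidiag]
  exact sum_congr rfl fun σ _ => ite_and ..

theorem condExp_eq (c : ℕ → ℝ) (Λ₁ : Finset Λ) (N m : ℕ) (f : (Λ → ℕ) → ℝ) :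
    condExp c Λ₁ N m f =
      (∑ η ∈ configs Λ₁ N m, weight c η * f η) / ∑ η ∈ configs Λ₁ N m, weight c η := by
  rw [condExp, ← sum_fin_eq_sum_configs, ← sum_fin_eq_sum_configs]
  rfl

theorem gammaFun_eq (c : ℕ → ℝ) (Λ₁ : Finset Λ) (N m : ℕ) :
    gammaFun c Λ₁ N m =
      (∑ η ∈ configs Λ₁ N m, weight c η) / ∑ η ∈ piAntidiag (univ : Finset Λ) N, weight c η := by
  rw [gammaFun, ← sum_fin_eq_sum_configs, ← sum_fin_eq_sum_piAntidiag]
  rfl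

/-- Adding a particle at `z` is a bijection from the configurations with `N` particles onto those
with `N + 1` particles that are occupied at `z`; `G` vanishes on the others. -/
theorem sum_configs_succ (Λ₁ : Finset Λ) (N m : ℕ) (z : Λ) {G : (Λ → ℕ) → M}
    (hG : ∀ η, η z = 0 → G η = 0) :
    ∑ η ∈ configs Λ₁ (N + 1) (m + if z ∈ Λ₁ then 1 else 0), G η =
      ∑ ζ ∈ configs Λ₁ N m, G (ζ + Pi.single z 1) := by
  have hcancel : ∀ η : Λ → ℕ, η z ≠ 0 → η - Pi.single z 1 + Pi.single z 1 = η := by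
    intro η hη
    funext w
    by_cases hw : w = z
    · subst hw
      simp only [Pi.add_apply, Pi.sub_apply, Pi.single_eq_same]
      omega
    · simp [hw]
  rw [← sum_filter_of_ne (p := fun η => η z ≠ 0) fun η _ hGη hη => hGη (hG η hη)]
  refine (sum_nbij' (· + Pi.single z 1) (· - Pi.single z 1) ?_ ?_ ?_ ?_ fun _ _ => rfl).symm
  · intro ζ hζ
    rw [mem_configs] at hζ
    rw [mem_filter, mem_configs, sum_add_single_apply, sum_add_single_apply, hζ.1, hζ.2]
    simp
  · intro η hη
    simp only [mem_filter, mem_configs] at hη ⊢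
    obtain ⟨⟨hN, hm⟩, hz⟩ := hη
    rw [← hcancel η hz, sum_add_single_apply, if_pos (mem_univ z)] at hN
    rw [← hcancel η hz, sum_add_single_apply] at hm
    exact ⟨Nat.add_right_cancel hN, Nat.add_right_cancel hm⟩
  · intro ζ _
    exact add_tsub_cancel_right ζ _
  · intro η hη
    exact hcancel η (mem_filter.1 hη).2

theorem weight_add_single (c : ℕ → ℝ) (hc : ∀ k, c (k + 1) ≠ 0) (ζ : Λ → ℕ) (z : Λ) :
    weight c (ζ + Pi.single z 1) = weight c ζ / c (ζ z + 1) := by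
  have hrest : ∏ w ∈ univ.erase z, (cfact c ((ζ + Pi.single z 1 : Λ → ℕ) w))⁻¹ =
      ∏ w ∈ univ.erase z, (cfact c (ζ w))⁻¹ :=
    prod_congr rfl fun w hw => by simp [ne_of_mem_erase hw]
  rw [weight, weight, ← mul_prod_erase univ _ (mem_univ z), hrest,
    ← mul_prod_erase univ (fun w => (cfact c (ζ w))⁻¹) (mem_univ z)]
  simp only [Pi.add_apply, Pi.single_eq_same, cfact, prod_range_succ, mul_inv]
  field_simp [hc]

theorem sum_configs_succ_weight_mul_apply (c : ℕ → ℝ) (hc : ∀ k, c (k + 1) ≠ 0)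
    {Λ₁ : Finset Λ} (N m : ℕ) {x : Λ} (hx : x ∈ Λ₁) :
    ∑ η ∈ configs Λ₁ (N + 1) (m + 1), weight c η * η x =
      ∑ ζ ∈ configs Λ₁ N m, weight c ζ * (((ζ x : ℝ) + 1) / c (ζ x + 1)) := by
  have h := sum_configs_succ Λ₁ N m x (G := fun η => weight c η * η x) fun η hη => by simp [hη]
  rw [if_pos hx] at h
  rw [h]
  refine sum_congr rfl fun ζ _ => ?_
  simp only [weight_add_single c hc, Pi.add_apply, Pi.single_eq_same, Nat.cast_add,
    Nat.cast_one]
  ring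

theorem sum_configs_succ_weight_mul_c_mul (c : ℕ → ℝ) (hc0 : c 0 = 0)
    (hc : ∀ k, c (k + 1) ≠ 0) {Λ₁ : Finset Λ} (N m : ℕ) {x y : Λ} (hy : y ∉ Λ₁) (hxy : x ≠ y) :
    ∑ η ∈ configs Λ₁ (N + 1) m, weight c η * (c (η y) * (((η x : ℝ) + 1) / c (η x + 1))) =
      ∑ ζ ∈ configs Λ₁ N m, weight c ζ * (((ζ x : ℝ) + 1) / c (ζ x + 1)) := by
  have h := sum_configs_succ Λ₁ N m y
    (G := fun η => weight c η * (c (η y) * (((η x : ℝ) + 1) / c (η x + 1))))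
    fun η hη => by simp [hη, hc0]
  rw [if_neg hy, add_zero] at h
  rw [h]
  refine sum_congr rfl fun ζ _ => ?_
  simp only [weight_add_single c hc, Pi.add_apply, Pi.single_eq_same,
    Pi.single_eq_of_ne hxy, add_zero]
  field_simp [hc]

theorem sum_configs_succ_weight_mul_c_mul_sum (c : ℕ → ℝ) (hc0 : c 0 = 0)
    (hc : ∀ k, c (k + 1) ≠ 0) {Λ₁ : Finset Λ} (N m : ℕ) {y : Λ} (hy : y ∉ Λ₁) :
    ∑ η ∈ configs Λ₁ (N + 1) m,
        weight c η * (c (η y) * ∑ x ∈ Λ₁, ((η x : ℝ) + 1) / c (η x + 1)) =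
      (m + 1) * ∑ η ∈ configs Λ₁ (N + 1) (m + 1), weight c η := by
  calc _ = ∑ x ∈ Λ₁, ∑ η ∈ configs Λ₁ (N + 1) m,
          weight c η * (c (η y) * (((η x : ℝ) + 1) / c (η x + 1))) := by
        simp only [mul_sum]
        exact sum_comm
    _ = ∑ x ∈ Λ₁, ∑ η ∈ configs Λ₁ (N + 1) (m + 1), weight c η * η x :=
        sum_congr rfl fun x hx => by
          rw [sum_configs_succ_weight_mul_c_mul c hc0 hc N m hy (ne_of_mem_of_not_mem hx hy),
            sum_configs_succ_weight_mul_apply c hc N m hx]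
    _ = ∑ η ∈ configs Λ₁ (N + 1) (m + 1), weight c η * ∑ x ∈ Λ₁, (η x : ℝ) := by
        simp only [mul_sum]
        exact sum_comm
    _ = _ := by
        rw [mul_sum]
        refine sum_congr rfl fun η hη => ?_
        rw [← Nat.cast_sum, (mem_configs.1 hη).2]
        push_cast
        ring

end ZeroRange

theorem normalization_identity_general {Λ : Type*} [Fintype Λ] [DecidableEq Λ]
    (c : ℕ → ℝ) (hc0 : c 0 = 0) (hcpos : ∀ k, 0 < k → 0 < c k)
    (Λ₁ Λ₂ : Finset Λ) (hdisj : Disjoint Λ₁ Λ₂)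
    (N n : ℕ) (hn1 : 1 ≤ n) (hnN : n ≤ N)
    (y : Λ) (hy : y ∈ Λ₂)
    (hγ : 0 < gammaFun c Λ₁ N n) (hγ' : 0 < gammaFun c Λ₁ N (n - 1)) :
    (gammaFun c Λ₁ N (n - 1) / ((n : ℝ) * gammaFun c Λ₁ N n)) *
      condExp c Λ₁ N (n - 1) (fun η =>
        c (η y) * ∑ x ∈ Λ₁, ((η x : ℝ) + 1) / c (η x + 1)) = 1 := by
  have hc : ∀ k, c (k + 1) ≠ 0 := fun k => (hcpos _ k.succ_pos).ne'
  obtain ⟨N, rfl⟩ : ∃ N', N = N' + 1 := ⟨N - 1, by omega⟩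
  obtain ⟨m, rfl⟩ : ∃ m, n = m + 1 := ⟨n - 1, by omega⟩
  rw [Nat.add_sub_cancel, ZeroRange.gammaFun_eq] at hγ'
  rw [ZeroRange.gammaFun_eq] at hγ
  obtain ⟨hA₁, hZ⟩ := div_ne_zero_iff.1 hγ.ne'
  have hA₀ := (div_ne_zero_iff.1 hγ'.ne').1
  rw [Nat.add_sub_cancel, ZeroRange.gammaFun_eq, ZeroRange.gammaFun_eq, ZeroRange.condExp_eq,
    ZeroRange.sum_configs_succ_weight_mul_c_mul_sum c hc0 hc N m (disjoint_right.1 hdisj hy)]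
  push_cast
  field_simp

/-- Normalization identity:
`(γ(n−1)/(n γ(n))) ν_Λ^N[c(η_y) ∑_{x∈Λ₁} h(η_x) | η̄_{Λ₁}=n−1] = 1`, with `h(k)=(k+1)/c(k+1)`. -/
theorem normalization_identity {Λ : Type*} [Fintype Λ] [DecidableEq Λ]
    (c : ℕ → ℝ) (hc0 : c 0 = 0) (hcpos : ∀ k, 0 < k → 0 < c k)
    (Λ₁ Λ₂ : Finset Λ) (hdisj : Disjoint Λ₁ Λ₂) (hpart : Λ₁ ∪ Λ₂ = Finset.univ)
    (hΛ₁ : Λ₁.Nonempty) (hΛ₂ : Λ₂.Nonempty)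
    (N n : ℕ) (hn1 : 1 ≤ n) (hnN : n ≤ N)
    (y : Λ) (hy : y ∈ Λ₂)
    (hγ : 0 < gammaFun c Λ₁ N n) (hγ' : 0 < gammaFun c Λ₁ N (n - 1)) :
    (gammaFun c Λ₁ N (n - 1) / ((n : ℝ) * gammaFun c Λ₁ N n)) *
      condExp c Λ₁ N (n - 1) (fun η =>
        c (η y) * ∑ x ∈ Λ₁, ((η x : ℝ) + 1) / c (η x + 1)) = 1 :=
  normalization_identity_general c hc0 hcpos Λ₁ Λ₂ hdisj N n hn1 hnN y hy hγ hγ'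
end

section
/- Tail-ratio bound for grand canonical particle number: let μ_α on ℕ^Λ be the product measure with marginals μ_α[η_x = k] = α^k/(Z(α)·c(k)!), and p(n) := μ_α[∑_{x∈Λ} η_x = n]. If A₀⁻¹ k ≤ c(k) ≤ A₀ k for all k ≥ 1, then (α|Λ|)/(A₀(n+1)) ≤ p(n+1)/p(n) ≤ (A₀ α|Λ|)/(n+1) for all n ∈ ℕ. -/
/-!
With the canonical partition function `W(n) = ∑_{|η| = n} ∏_x 1/c(η_x)!` one has
`p(n) = α^n Z(α)^{-|Λ|} W(n)`, so `p(n+1)/p(n) = α W(n+1)/W(n)`. Removing a particle at `x` is a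
bijection from the configurations with `n + 1` particles and `η_x > 0` onto those with `n`
particles, and summing `(n+1) = ∑_x η_x` over it gives
`(n+1) W(n+1) = ∑_x ∑_{|ζ| = n} (ζ_x + 1)/c(ζ_x + 1) ∏_y 1/c(ζ_y)!`.
The growth condition puts every factor `(k+1)/c(k+1)` in `[A₀⁻¹, A₀]`, hence
`(n+1) W(n+1)/W(n) ∈ [A₀⁻¹|Λ|, A₀|Λ|]`.
-/

open Finset

/-- The grand canonical normalization `Z(α) = ∑_k α^k/c(k)!`. -/
noncomputable def grandZ (c : ℕ → ℝ) (α : ℝ) : ℝ := ∑' k : ℕ, α ^ k / cfact c k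

/-- `pGC c α Λ n = μ_α[η̄_Λ = n]`, the probability under the grand canonical product measure
with marginals `μ_α[η_x = k] = α^k/(Z(α) c(k)!)` that the total particle number equals `n`. -/
noncomputable def pGC (c : ℕ → ℝ) (α : ℝ) (Λ : Type*) [Fintype Λ] (n : ℕ) : ℝ :=
  ∑' η : Λ → ℕ,
    if (∑ x, η x) = n then ∏ x, α ^ η x / (grandZ c α * cfact c (η x)) else 0

open Function

lemma Finset.sum_update_add_self {ι : Type*} [Fintype ι] [DecidableEq ι] (η : ι → ℕ) (x : ι)
    (v : ℕ) : univ.sum (update η x v) + η x = v + univ.sum η := by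
  rw [sum_update_of_mem (mem_univ x), ← add_sum_erase _ _ (mem_univ x), erase_eq]
  ring

lemma Finset.sum_piAntidiag_univ_succ_mul {ι R : Type*} [Fintype ι] [DecidableEq ι]
    [CommSemiring R] (f : (ι → ℕ) → R) (n : ℕ) (x : ι) :
    ∑ η ∈ piAntidiag univ (n + 1), (η x : R) * f η =
      ∑ ζ ∈ piAntidiag univ n, ((ζ x : R) + 1) * f (update ζ x (ζ x + 1)) := by
  rw [← sum_filter_of_ne (p := fun η => η x ≠ 0) (by intro η _ h hx; simp [hx] at h)]
  symm
  refine sum_nbij' (fun ζ => update ζ x (ζ x + 1)) (fun η => update η x (η x - 1))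
    (fun ζ hζ => ?_) (fun η hη => ?_) (fun ζ _ => ?_) (fun η hη => ?_) (fun ζ _ => ?_)
  · have := sum_update_add_self ζ x (ζ x + 1)
    simp only [mem_piAntidiag, mem_filter, update_self] at hζ ⊢
    exact ⟨⟨by omega, by simp⟩, by omega⟩
  · have := sum_update_add_self η x (η x - 1)
    simp only [mem_piAntidiag, mem_filter] at hη ⊢
    exact ⟨by omega, by simp⟩
  · simp
  · simp only [mem_filter] at hη
    simp [Nat.sub_add_cancel (Nat.one_le_iff_ne_zero.mpr hη.2)]
  · simp

section cfact

variable (c : ℕ → ℝ)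

lemma cfact_succ (n : ℕ) : cfact c (n + 1) = cfact c n * c (n + 1) :=
  prod_range_succ _ n

lemma cfact_pos (hcpos : ∀ k, 0 < k → 0 < c k) (n : ℕ) : 0 < cfact c n :=
  prod_pos fun k _ => hcpos _ k.succ_pos

lemma prod_inv_cfact_update_succ {Λ : Type*} [Fintype Λ] [DecidableEq Λ] (ζ : Λ → ℕ) (x : Λ) :
    ∏ y, (cfact c (update ζ x (ζ x + 1) y))⁻¹ = (c (ζ x + 1))⁻¹ * ∏ y, (cfact c (ζ y))⁻¹ := by
  simp_rw [apply_update (fun _ k => (cfact c k)⁻¹)]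
  rw [prod_update_of_mem (mem_univ x), ← mul_prod_erase _ _ (mem_univ x), erase_eq,
    cfact_succ, mul_inv, mul_comm (cfact c (ζ x))⁻¹, mul_assoc]

lemma grandZ_pos (hcpos : ∀ k, 0 < k → 0 < c k) {α : ℝ} (hα : 0 < α)
    (hsum : Summable fun k : ℕ => α ^ k / cfact c k) : 0 < grandZ c α := by
  have h0 : α ^ 0 / cfact c 0 ≤ grandZ c α :=
    hsum.le_tsum 0 fun k _ => div_nonneg (pow_nonneg hα.le k) (cfact_pos c hcpos k).le
  simp only [cfact, pow_zero, range_zero, prod_empty, div_one] at h0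
  linarith

end cfact

noncomputable def canonicalZ (c : ℕ → ℝ) (Λ : Type*) [Fintype Λ] [DecidableEq Λ] (n : ℕ) : ℝ :=
  ∑ η ∈ piAntidiag (univ : Finset Λ) n, ∏ x, (cfact c (η x))⁻¹

section canonicalZ

variable (c : ℕ → ℝ) {Λ : Type*} [Fintype Λ] [DecidableEq Λ]

lemma canonicalZ_pos [Nonempty Λ] (hcpos : ∀ k, 0 < k → 0 < c k) (n : ℕ) :
    0 < canonicalZ c Λ n := by
  obtain ⟨x₀⟩ := ‹Nonempty Λ›
  have hpos : ∀ η : Λ → ℕ, 0 < ∏ x, (cfact c (η x))⁻¹ := fun η =>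
    prod_pos fun x _ => inv_pos.mpr (cfact_pos c hcpos _)
  exact sum_pos' (fun η _ => (hpos η).le) ⟨Pi.single x₀ n, by simp, hpos _⟩

lemma succ_mul_canonicalZ_succ (n : ℕ) :
    ((n : ℝ) + 1) * canonicalZ c Λ (n + 1) =
      ∑ x, ∑ ζ ∈ piAntidiag (univ : Finset Λ) n,
        ((ζ x : ℝ) + 1) / c (ζ x + 1) * ∏ y, (cfact c (ζ y))⁻¹ := by
  have hcount : ∀ η ∈ piAntidiag (univ : Finset Λ) (n + 1),
      ((n : ℝ) + 1) * ∏ y, (cfact c (η y))⁻¹ = ∑ x, (η x : ℝ) * ∏ y, (cfact c (η y))⁻¹ := by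
    intro η hη
    rw [← sum_mul, ← Nat.cast_sum, (mem_piAntidiag.mp hη).1]
    push_cast
    rfl
  rw [canonicalZ, mul_sum, sum_congr rfl hcount, sum_comm]
  refine sum_congr rfl fun x _ => ?_
  rw [sum_piAntidiag_univ_succ_mul]
  simp_rw [prod_inv_cfact_update_succ, div_eq_mul_inv, mul_assoc]

lemma canonicalZ_succ_div_mem_Icc [Nonempty Λ] (hcpos : ∀ k, 0 < k → 0 < c k) {a b : ℝ}
    (hratio : ∀ k : ℕ, ((k : ℝ) + 1) / c (k + 1) ∈ Set.Icc a b) (n : ℕ) :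
    canonicalZ c Λ (n + 1) / canonicalZ c Λ n ∈
      Set.Icc (a * Fintype.card Λ / (n + 1)) (b * Fintype.card Λ / (n + 1)) := by
  have hW := canonicalZ_pos c hcpos (Λ := Λ) n
  have hP : ∀ ζ : Λ → ℕ, 0 ≤ ∏ y, (cfact c (ζ y))⁻¹ := fun ζ =>
    prod_nonneg fun y _ => (inv_pos.mpr (cfact_pos c hcpos _)).le
  have hconst : ∀ r : ℝ, r * Fintype.card Λ * canonicalZ c Λ n =
      ∑ x : Λ, ∑ ζ ∈ piAntidiag (univ : Finset Λ) n, r * ∏ y, (cfact c (ζ y))⁻¹ := fun r => by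
    simp only [← mul_sum]
    rw [sum_const, card_univ, nsmul_eq_mul, canonicalZ]
    ring
  rw [Set.mem_Icc, div_le_div_iff₀ (by positivity) hW, div_le_div_iff₀ hW (by positivity),
    mul_comm _ (_ + 1), succ_mul_canonicalZ_succ, hconst, hconst]
  exact ⟨sum_le_sum fun x _ => sum_le_sum fun ζ _ =>
      mul_le_mul_of_nonneg_right (hratio (ζ x)).1 (hP ζ),
    sum_le_sum fun x _ => sum_le_sum fun ζ _ =>
      mul_le_mul_of_nonneg_right (hratio (ζ x)).2 (hP ζ)⟩

end canonicalZ

lemma pGC_eq_mul_canonicalZ (c : ℕ → ℝ) (α : ℝ) (Λ : Type*) [Fintype Λ] [DecidableEq Λ]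
    (n : ℕ) : pGC c α Λ n = α ^ n / grandZ c α ^ Fintype.card Λ * canonicalZ c Λ n := by
  rw [pGC, tsum_eq_sum (s := piAntidiag (univ : Finset Λ) n) fun η hη => if_neg (by simpa using hη),
    canonicalZ, mul_sum]
  refine sum_congr rfl fun η hη => ?_
  rw [if_pos (by simpa using hη), prod_div_distrib, prod_mul_distrib, prod_const,
    prod_pow_eq_pow_sum, (mem_piAntidiag.mp hη).1, card_univ, prod_inv_distrib,
    div_mul_eq_div_div, ← div_eq_mul_inv]

lemma div_mem_Icc_inv_of_mem_Icc {A x y : ℝ} (hA : 0 < A) (hy : 0 < y)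
    (h : y ∈ Set.Icc (A⁻¹ * x) (A * x)) : x / y ∈ Set.Icc A⁻¹ A := by
  rw [Set.mem_Icc, inv_mul_le_iff₀ hA] at h
  rw [Set.mem_Icc, le_div_iff₀ hy, div_le_iff₀ hy, inv_mul_le_iff₀ hA]
  exact h.symm

lemma pGC_succ_div (c : ℕ → ℝ) {α : ℝ} (Λ : Type*) [Fintype Λ] [DecidableEq Λ]
    (hα : α ≠ 0) (hZ : grandZ c α ≠ 0) (n : ℕ) :
    pGC c α Λ (n + 1) / pGC c α Λ n = α * (canonicalZ c Λ (n + 1) / canonicalZ c Λ n) := by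
  rw [pGC_eq_mul_canonicalZ, pGC_eq_mul_canonicalZ]
  field_simp
  ring

theorem grand_canonical_tail_ratio_general {Λ : Type*} [Fintype Λ] [Nonempty Λ]
    (c : ℕ → ℝ) (hcpos : ∀ k, 0 < k → 0 < c k)
    (A₀ : ℝ) (hA₀ : 1 ≤ A₀)
    (hgrow : ∀ k : ℕ, 1 ≤ k → A₀⁻¹ * k ≤ c k ∧ c k ≤ A₀ * k)
    (α : ℝ) (hα : 0 < α) (hsum : Summable fun k : ℕ => α ^ k / cfact c k) :
    ∀ n : ℕ,
      α * (Fintype.card Λ) / (A₀ * (n + 1)) ≤ pGC c α Λ (n + 1) / pGC c α Λ n ∧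
      pGC c α Λ (n + 1) / pGC c α Λ n ≤ A₀ * α * (Fintype.card Λ) / (n + 1) := by
  classical
  intro n
  have hA₀pos : 0 < A₀ := one_pos.trans_le hA₀
  have hratio : ∀ k : ℕ, ((k : ℝ) + 1) / c (k + 1) ∈ Set.Icc A₀⁻¹ A₀ :=
    fun k => div_mem_Icc_inv_of_mem_Icc hA₀pos (hcpos _ k.succ_pos)
      (by exact_mod_cast hgrow (k + 1) k.succ_pos)
  obtain ⟨hlow, hup⟩ := canonicalZ_succ_div_mem_Icc c (Λ := Λ) hcpos hratio n
  rw [pGC_succ_div c Λ hα.ne' (grandZ_pos c hcpos hα hsum).ne']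
  constructor
  · calc α * Fintype.card Λ / (A₀ * (n + 1)) = α * (A₀⁻¹ * Fintype.card Λ / (n + 1)) := by
          field_simp
      _ ≤ _ := mul_le_mul_of_nonneg_left hlow hα.le
  · calc _ ≤ α * (A₀ * Fintype.card Λ / (n + 1)) := mul_le_mul_of_nonneg_left hup hα.le
      _ = A₀ * α * Fintype.card Λ / (n + 1) := by ring

/-- Tail-ratio bound for the grand canonical particle number. -/
theorem grand_canonical_tail_ratio {Λ : Type*} [Fintype Λ] [Nonempty Λ]
    (c : ℕ → ℝ) (hc0 : c 0 = 0) (hcpos : ∀ k, 0 < k → 0 < c k)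
    (A₀ : ℝ) (hA₀ : 1 ≤ A₀)
    (hgrow : ∀ k : ℕ, 1 ≤ k → A₀⁻¹ * k ≤ c k ∧ c k ≤ A₀ * k)
    (α : ℝ) (hα : 0 < α) (hsum : Summable fun k : ℕ => α ^ k / cfact c k) :
    ∀ n : ℕ,
      α * (Fintype.card Λ) / (A₀ * (n + 1)) ≤ pGC c α Λ (n + 1) / pGC c α Λ n ∧
      pGC c α Λ (n + 1) / pGC c α Λ n ≤ A₀ * α * (Fintype.card Λ) / (n + 1) :=
  grand_canonical_tail_ratio_general c hcpos A₀ hA₀ hgrow α hα hsum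
end
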